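/- If X is a π-space and K ⊆ X is a σ-compact subset, then the subspace X \ K is a π-space. -/
import Mathlib


open Set Topology

namespace PiSpacePaper

/-- The restriction `p↾n` of `p : ℕ → ℕ`, as a list of length `n`. -/
def restrictSeq (p : ℕ → ℕ) (n : ℕ) : List ℕ := (List.range n).map p

/-- The basic clopen set `S_a` of the Baire space. -/
def cyl (a : List ℕ) : Set (ℕ → ℕ) := {p | restrictSeq p a.length = a}

/-- The fruit `⋂ n, V (p↾n)` of a branch `p` in a Souslin scheme `V`. -/
def fruit {X : Type*} (V : List ℕ → Set X) (p : ℕ → ℕ) : Set X :=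
  ⋂ n : ℕ, V (restrictSeq p n)

/-- A Souslin scheme `V` covers the set `s`. -/
def Covers {X : Type*} (V : List ℕ → Set X) (s : Set X) : Prop :=
  V [] = s ∧ ∀ a : List ℕ, V a = ⋃ n : ℕ, V (a ++ [n])

/-- A Souslin scheme `V` partitions the set `s`. -/
def Partitions {X : Type*} (V : List ℕ → Set X) (s : Set X) : Prop :=
  Covers V s ∧ ∀ (a : List ℕ) (n m : ℕ), n ≠ m → V (a ++ [n]) ∩ V (a ++ [m]) = ∅

/-- A Souslin scheme is complete iff all fruits are nonempty. -/
def Complete {X : Type*} (V : List ℕ → Set X) : Prop :=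
  ∀ p : ℕ → ℕ, (fruit V p).Nonempty

/-- A Souslin scheme has strict branches iff every fruit is a singleton. -/
def StrictBranches {X : Type*} (V : List ℕ → Set X) : Prop :=
  ∀ p : ℕ → ℕ, ∃ x : X, fruit V p = {x}

/-- A Souslin scheme is open iff all its members are open sets. -/
def OpenScheme {X : Type*} [TopologicalSpace X] (V : List ℕ → Set X) : Prop :=
  ∀ a : List ℕ, IsOpen (V a)

/-- `flesh V = ⋃ a, V a`. -/
def flesh {X : Type*} (V : List ℕ → Set X) : Set X := ⋃ a : List ℕ, V a

/-- `branches V x = {q ∈ ℕ^ℕ : x ∈ fruit V q}`. -/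
def branches {X : Type*} (V : List ℕ → Set X) (x : X) : Set (ℕ → ℕ) :=
  {q | x ∈ fruit V q}

/-- A family `γ` of subsets is a π-net for a space: all members are nonempty and every
nonempty open set contains a member. -/
def IsPiNet {X : Type*} [TopologicalSpace X] (γ : Set (Set X)) : Prop :=
  (∀ G ∈ γ, G.Nonempty) ∧
  ∀ U : Set X, IsOpen U → U.Nonempty → ∃ G ∈ γ, G ⊆ U

/-- A family `γ` of subsets is a π-base for a space: all members are nonempty open sets
and every nonempty open set contains a member. -/
def IsPiBase {X : Type*} [TopologicalSpace X] (γ : Set (Set X)) : Prop :=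
  (∀ G ∈ γ, IsOpen G ∧ G.Nonempty) ∧
  ∀ U : Set X, IsOpen U → U.Nonempty → ∃ G ∈ γ, G ⊆ U

/-- A π-space: there is an open Souslin scheme that partitions the space, has strict
branches, and whose family of members is a π-base. -/
def IsPiSpace (X : Type*) [TopologicalSpace X] : Prop :=
  ∃ V : List ℕ → Set X, OpenScheme V ∧ Partitions V Set.univ ∧ StrictBranches V ∧
    IsPiBase {S : Set X | ∃ a : List ℕ, S = V a}

/-- A Lusin π-base for a space. -/
def IsLusinPiBase {X : Type*} [TopologicalSpace X] (V : List ℕ → Set X) : Prop :=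
  OpenScheme V ∧ Partitions V Set.univ ∧ StrictBranches V ∧
  ∀ (x : X) (U : Set X), IsOpen U → x ∈ U →
    ∃ (a : List ℕ) (n : ℕ), x ∈ V a ∧ (⋃ i : ℕ, ⋃ _ : n ≤ i, V (a ++ [i])) ⊆ U

/-- A map is quasi-open iff the image of every nonempty open set has nonempty interior. -/
def IsQuasiOpen {X Y : Type*} [TopologicalSpace X] [TopologicalSpace Y] (f : X → Y) : Prop :=
  ∀ U : Set X, IsOpen U → U.Nonempty → (interior (f '' U)).Nonempty

/-- A π-net Souslin scheme on a space `X`: for every finite sequence `a`, the family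
`{V b : b ⊒ a}` is a π-net for the subspace `V a` of `X` (whose nonempty open sets are
exactly the nonempty sets `U ∩ V a` with `U` open in `X`). -/
def IsPiNetScheme {X : Type*} [TopologicalSpace X] (V : List ℕ → Set X) : Prop :=
  ∀ a : List ℕ,
    (∀ b : List ℕ, a <+: b → (V b).Nonempty) ∧
    ∀ U : Set X, IsOpen U → (U ∩ V a).Nonempty → ∃ b : List ℕ, a <+: b ∧ V b ⊆ U ∩ V a

/-- A π-base Souslin scheme on a space is an open π-net Souslin scheme. -/
def IsPiBaseScheme {X : Type*} [TopologicalSpace X] (V : List ℕ → Set X) : Prop :=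
  OpenScheme V ∧ IsPiNetScheme V

/-- A selector on a Souslin scheme `V`: a surjection of the Baire space onto `flesh V`
such that every fiber `f⁻¹(x)` is a dense subset of the subspace `branches V x` of the
Baire space. -/
def IsSelector {X : Type*} (V : List ℕ → Set X) (f : (ℕ → ℕ) → X) : Prop :=
  Set.range f = flesh V ∧
  ∀ x ∈ flesh V, f ⁻¹' {x} ⊆ branches V x ∧ branches V x ⊆ closure (f ⁻¹' {x})

/-- The topology `σ_{τ,f}` on the Baire space, generated by the subbase consisting of the
`τ`-preimages under `f` together with the basic sets `S_a`. -/
def sigmaTop {X : Type*} [TopologicalSpace X] (f : (ℕ → ℕ) → X) :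
    TopologicalSpace (ℕ → ℕ) :=
  TopologicalSpace.generateFrom
    ({S : Set (ℕ → ℕ) | ∃ U : Set X, IsOpen U ∧ S = f ⁻¹' U} ∪
      {S : Set (ℕ → ℕ) | ∃ a : List ℕ, S = cyl a})

/-- The Souslin scheme `V^g`, where `V^g_a = V_{g ∘ a}`. -/
def schemeComp {X : Type*} (V : List ℕ → Set X) (g : ℕ → ℕ) : List ℕ → Set X :=
  fun a => V (a.map g)

/-- A subset of the Baire space is dense-in-itself iff it has no isolated points. -/
def DenseInItself (B : Set (ℕ → ℕ)) : Prop :=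
  ∀ q ∈ B, q ∈ closure (B \ {q})

/-- `X` is a continuous open image of a π-space. -/
def IsContinuousOpenImageOfPiSpace (X : Type) [TopologicalSpace X] : Prop :=
  ∃ (Y : Type) (_ : TopologicalSpace Y) (f : Y → X),
    IsPiSpace Y ∧ Continuous f ∧ IsOpenMap f ∧ Function.Surjective f

/-- The topology `τ_N` on the Baire space generated by the sets `U \ A` with `U` open in
the Baire space and `A` nowhere dense in the Baire space. -/
def tauN : TopologicalSpace (ℕ → ℕ) :=
  TopologicalSpace.generateFrom
    {S : Set (ℕ → ℕ) | ∃ U A : Set (ℕ → ℕ), IsOpen U ∧ IsNowhereDense A ∧ S = U \ A}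






@[simp] lemma restrictSeq_length (p : ℕ → ℕ) (n : ℕ) : (restrictSeq p n).length = n := by
  simp [restrictSeq]

lemma restrictSeq_succ (p : ℕ → ℕ) (n : ℕ) :
    restrictSeq p (n+1) = restrictSeq p n ++ [p n] := by
  simp [restrictSeq, List.range_succ]

@[simp] lemma restrictSeq_zero (p : ℕ → ℕ) : restrictSeq p 0 = [] := rfl

lemma restrictSeq_take (p : ℕ → ℕ) {m n : ℕ} (h : m ≤ n) :
    (restrictSeq p n).take m = restrictSeq p m := by
  simp [restrictSeq, ← List.map_take, List.take_range, Nat.min_eq_left h]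

lemma restrictSeq_prefix (p : ℕ → ℕ) {m n : ℕ} (h : m ≤ n) :
    restrictSeq p m <+: restrictSeq p n := by
  rw [← restrictSeq_take p h]; exact List.take_prefix _ _

lemma restrictSeq_getD (p : ℕ → ℕ) {k n : ℕ} (h : k < n) :
    (restrictSeq p n).getD k 0 = p k := by
  rw [List.getD_eq_getElem _ _ (by simpa using h)]
  simp [restrictSeq]

lemma prefix_total {l1 l2 l3 : List ℕ} (h1 : l1 <+: l2) (h2 : l3 <+: l2) :
    l1 <+: l3 ∨ l3 <+: l1 := by
  rcases le_total l1.length l3.length with h | h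
  · left
    rw [List.prefix_iff_eq_take] at h1 h2 ⊢
    rw [h2, List.take_take, Nat.min_eq_left h, ← h1]
  · right
    rw [List.prefix_iff_eq_take] at h1 h2 ⊢
    rw [h1, List.take_take, Nat.min_eq_left h, ← h2]

lemma mem_cyl {p : ℕ → ℕ} {b : List ℕ} : p ∈ cyl b ↔ restrictSeq p b.length = b := Iff.rfl

lemma mem_cyl_self (p : ℕ → ℕ) (n : ℕ) : p ∈ cyl (restrictSeq p n) := by
  simp [mem_cyl]

@[simp] lemma cyl_nil : cyl ([] : List ℕ) = univ := by
  ext p; simp [mem_cyl]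

lemma cyl_mono {b b' : List ℕ} (h : b <+: b') : cyl b' ⊆ cyl b := by
  intro p hp
  rw [mem_cyl] at hp ⊢
  have hl : b.length ≤ b'.length := h.length_le
  rw [List.prefix_iff_eq_take] at h
  rw [h, ← hp, List.length_take, restrictSeq_length, Nat.min_eq_left hl,
    restrictSeq_take p hl]

lemma eq_restrict_of_mem_cyl {p : ℕ → ℕ} {b : List ℕ} (h : p ∈ cyl b) :
    b = restrictSeq p b.length := (mem_cyl.1 h).symm

lemma cyl_comparable {p : ℕ → ℕ} {b b' : List ℕ} (h : p ∈ cyl b) (h' : p ∈ cyl b') :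
    b <+: b' ∨ b' <+: b := by
  rw [eq_restrict_of_mem_cyl h, eq_restrict_of_mem_cyl h']
  rcases le_total b.length b'.length with hl | hl
  · exact Or.inl (restrictSeq_prefix p hl)
  · exact Or.inr (restrictSeq_prefix p hl)

lemma cyl_disjoint {b b' : List ℕ} (h : ¬ b <+: b') (h' : ¬ b' <+: b) :
    cyl b ∩ cyl b' = ∅ := by
  ext p; simp only [mem_inter_iff, mem_empty_iff_false, iff_false, not_and]
  intro hp hp'
  rcases cyl_comparable hp hp' with hc | hc
  exacts [h hc, h' hc]

lemma mem_cyl_concat {p : ℕ → ℕ} {b : List ℕ} (h : p ∈ cyl b) :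
    p ∈ cyl (b ++ [p b.length]) := by
  rw [mem_cyl] at h ⊢
  simp only [List.length_append, List.length_singleton]
  rw [restrictSeq_succ, h]

lemma funext_of_restrict {p q : ℕ → ℕ} (h : ∀ n, restrictSeq p n = restrictSeq q n) :
    p = q := by
  funext k
  have := h (k+1)
  have h1 := restrictSeq_getD p (Nat.lt_succ_self k)
  rw [this, restrictSeq_getD q (Nat.lt_succ_self k)] at h1
  exact h1.symm

lemma restrictSeq_eq_iff {p q : ℕ → ℕ} {n : ℕ} :
    restrictSeq p n = restrictSeq q n ↔ ∀ i < n, p i = q i := by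
  constructor
  · intro h i hi
    have := restrictSeq_getD p hi
    rw [h, restrictSeq_getD q hi] at this
    exact this.symm
  · intro h
    apply List.ext_getElem (by simp)
    intro i h1 h2
    simp only [restrictSeq, List.getElem_map, List.getElem_range]
    exact h i (by simpa using h1)


section Baire

/-- Coordinatewise bound for a compact subset of Baire space. -/
lemma compact_bound {M : Set (ℕ → ℕ)} (hM : IsCompact M) :
    ∃ g : ℕ → ℕ, ∀ p ∈ M, ∀ n, p n ≤ g n := by
  have h : ∀ n : ℕ, ∃ b : ℕ, ∀ p ∈ M, p n ≤ b := by
    intro n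
    have hc : IsCompact ((fun p : ℕ → ℕ => p n) '' M) := hM.image (continuous_apply n)
    have hf : ((fun p : ℕ → ℕ => p n) '' M).Finite := hc.finite_of_discrete
    obtain ⟨b, hb⟩ := hf.bddAbove
    exact ⟨b, fun p hp => hb ⟨p, hp, rfl⟩⟩
  choose g hg using h
  exact ⟨g, fun p hp n => hg n p hp⟩

/-- Every cylinder contains a point avoiding a countable family of compacts. -/
lemma cyl_diff_sigma_compact (L : ℕ → Set (ℕ → ℕ)) (hL : ∀ i, IsCompact (L i))
    (c : List ℕ) : ∃ p, p ∈ cyl c ∧ p ∉ ⋃ i, L i := by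
  choose g hg using fun i => compact_bound (hL i)
  classical
  refine ⟨fun n => if h : n < c.length then c.getD n 0
    else (Finset.range (n+1)).sup (fun i => g i n) + 1, ?_, ?_⟩
  · rw [mem_cyl]
    apply List.ext_getElem (by simp)
    intro i h1 h2
    simp only [restrictSeq, List.getElem_map, List.getElem_range]
    rw [dif_pos (by simpa using h1), List.getD_eq_getElem _ _ h2]
  · intro hp
    simp only [mem_iUnion] at hp
    obtain ⟨i, hi⟩ := hp
    have h1 : ¬ c.length + i < c.length := by omega
    have h2 := hg i _ hi (c.length + i)
    simp only [dif_neg h1] at h2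
    have h3 : g i (c.length + i) ≤
        (Finset.range (c.length + i + 1)).sup (fun j => g j (c.length + i)) := by
      have := Finset.le_sup (s := Finset.range (c.length + i + 1))
        (f := fun j => g j (c.length + i)) (b := i) (by simp only [Finset.mem_range]; omega)
      simpa using this
    omega

/-- If `p` avoids a compact set, some cylinder around `p` avoids it. -/
lemma exists_cyl_disjoint_compact {M : Set (ℕ → ℕ)} (hM : IsCompact M)
    {p : ℕ → ℕ} (hp : p ∉ M) : ∃ m : ℕ, cyl (restrictSeq p m) ∩ M = ∅ := by
  have hcl : IsClosed M := hM.isClosed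
  have hopen : IsOpen Mᶜ := hcl.isOpen_compl
  obtain ⟨v, ⟨x, n, rfl⟩, hxv, hvu⟩ :=
    (PiNat.isTopologicalBasis_cylinders (fun _ : ℕ => ℕ)).exists_subset_of_mem_open hp hopen
  refine ⟨n, ?_⟩
  have hsub : cyl (restrictSeq p n) ⊆ PiNat.cylinder x n := by
    intro q hq
    rw [mem_cyl, restrictSeq_length, restrictSeq_eq_iff] at hq
    intro i hi
    rw [hq i hi]
    exact hxv i hi
  ext q
  simp only [Set.mem_inter_iff, Set.mem_empty_iff_false, iff_false, not_and]
  intro h1 h2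
  exact hvu (hsub h1) h2

end Baire
section Scheme

variable (L : ℕ → Set (ℕ → ℕ))

/-- Union of the first `k+1` compacts. -/
def Mset (k : ℕ) : Set (ℕ → ℕ) := ⋃ i ∈ Set.Iic k, L i

lemma Mset_compact (hL : ∀ i, IsCompact (L i)) (k : ℕ) : IsCompact (Mset L k) :=
  Set.Finite.isCompact_biUnion (Set.finite_Iic k) (fun i _ => hL i)

lemma Mset_subset (k : ℕ) : Mset L k ⊆ ⋃ i, L i := by
  intro p hp
  simp only [Mset, mem_iUnion] at hp ⊢
  obtain ⟨i, _, hi⟩ := hp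
  exact ⟨i, hi⟩

lemma subset_Mset {i k : ℕ} (h : i ≤ k) : L i ⊆ Mset L k := by
  intro p hp
  simp only [Mset, mem_iUnion]
  exact ⟨i, h, hp⟩

/-- The property of being a good extension of `c`. -/
def GoodExt (c d : List ℕ) : Prop :=
  c <+: d ∧ c.length < d.length ∧ cyl d ∩ Mset L c.length = ∅

/-- Minimal good extensions of `c`. -/
def Bset (c : List ℕ) : Set (List ℕ) :=
  {d | GoodExt L c d ∧ ∀ d', d' <+: d → d' ≠ d → ¬ GoodExt L c d'}

lemma Bset_incomp {c d d' : List ℕ} (hd : d ∈ Bset L c) (hd' : d' ∈ Bset L c)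
    (hne : d ≠ d') : ¬ d <+: d' ∧ ¬ d' <+: d := by
  constructor
  · intro h
    exact hd'.2 d h hne hd.1
  · intro h
    exact hd.2 d' h (Ne.symm hne) hd'.1

lemma Bset_cover (hL : ∀ i, IsCompact (L i)) (c : List ℕ) {p : ℕ → ℕ}
    (hpc : p ∈ cyl c) (hp : p ∉ ⋃ i, L i) : ∃ d ∈ Bset L c, p ∈ cyl d := by
  classical
  have hpM : p ∉ Mset L c.length := fun h => hp (Mset_subset L _ h)
  have hex : ∃ m, GoodExt L c (restrictSeq p m) := by
    obtain ⟨m, hm⟩ := exists_cyl_disjoint_compact (Mset_compact L hL c.length) hpM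
    refine ⟨max m (c.length + 1), ?_, ?_, ?_⟩
    · have hc : c = restrictSeq p c.length := eq_restrict_of_mem_cyl hpc
      have hpre : restrictSeq p c.length <+: restrictSeq p (max m (c.length + 1)) :=
        restrictSeq_prefix p (le_max_of_le_right (by omega))
      rw [← hc] at hpre
      exact hpre
    · rw [restrictSeq_length]
      omega
    · have hsub : cyl (restrictSeq p (max m (c.length + 1))) ⊆ cyl (restrictSeq p m) :=
        cyl_mono (restrictSeq_prefix p (le_max_left _ _))
      rw [Set.eq_empty_iff_forall_notMem] at hm ⊢
      intro q hq
      exact hm q ⟨hsub hq.1, hq.2⟩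
  refine ⟨restrictSeq p (Nat.find hex), ⟨Nat.find_spec hex, ?_⟩, mem_cyl_self p _⟩
  intro d' hpre hne hgood
  have hlen : d'.length ≤ Nat.find hex := by
    have := hpre.length_le
    simpa using this
  have hd' : d' = restrictSeq p d'.length := by
    rw [List.prefix_iff_eq_take] at hpre
    conv_lhs => rw [hpre]
    exact restrictSeq_take p hlen
  have hlt : d'.length < Nat.find hex := by
    rcases lt_or_eq_of_le hlen with h | h
    · exact h
    · exfalso; apply hne; rw [hd', h]
  exact Nat.find_min hex hlt (hd' ▸ hgood)

lemma Bset_nonempty (hL : ∀ i, IsCompact (L i)) (c : List ℕ) : (Bset L c).Nonempty := by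
  obtain ⟨p, hpc, hp⟩ := cyl_diff_sigma_compact L hL c
  obtain ⟨d, hd, _⟩ := Bset_cover L hL c hpc hp
  exact ⟨d, hd⟩

/-- Children candidates: one-step extensions of minimal good extensions. -/
def B'set (c : List ℕ) : Set (List ℕ) :=
  {e | ∃ d ∈ Bset L c, ∃ j : ℕ, e = d ++ [j]}

lemma B'set_good {c e : List ℕ} (he : e ∈ B'set L c) : GoodExt L c e := by
  obtain ⟨d, hd, j, rfl⟩ := he
  obtain ⟨h1, h2, h3⟩ := hd.1
  refine ⟨List.IsPrefix.trans h1 ⟨[j], rfl⟩, by simp; omega, ?_⟩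
  rw [Set.eq_empty_iff_forall_notMem] at h3 ⊢
  intro q hq
  exact h3 q ⟨cyl_mono ⟨[j], rfl⟩ hq.1, hq.2⟩

lemma B'set_eq_of_prefix {c e e' : List ℕ} (he : e ∈ B'set L c) (he' : e' ∈ B'set L c)
    (h : e <+: e') : e = e' := by
  obtain ⟨d, hd, j, rfl⟩ := he
  obtain ⟨d', hd', j', rfl⟩ := he'
  have hd_pre : d <+: d' ++ [j'] := List.IsPrefix.trans (l₁ := d) ⟨[j], rfl⟩ h
  have hcomp : d <+: d' ∨ d' <+: d := prefix_total hd_pre ⟨[j'], rfl⟩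
  have hdd : d = d' := by
    by_contra hne
    obtain ⟨h1, h2⟩ := Bset_incomp L hd hd' hne
    rcases hcomp with hc | hc
    exacts [h1 hc, h2 hc]
  subst hdd
  exact h.eq_of_length (by simp)

lemma B'set_incomp {c e e' : List ℕ} (he : e ∈ B'set L c) (he' : e' ∈ B'set L c)
    (hne : e ≠ e') : ¬ e <+: e' ∧ ¬ e' <+: e :=
  ⟨fun h => hne (B'set_eq_of_prefix L he he' h),
   fun h => hne (B'set_eq_of_prefix L he' he h).symm⟩

lemma B'set_cover (hL : ∀ i, IsCompact (L i)) (c : List ℕ) {p : ℕ → ℕ}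
    (hpc : p ∈ cyl c) (hp : p ∉ ⋃ i, L i) : ∃ e ∈ B'set L c, p ∈ cyl e := by
  obtain ⟨d, hd, hpd⟩ := Bset_cover L hL c hpc hp
  exact ⟨d ++ [p d.length], ⟨d, hd, _, rfl⟩, mem_cyl_concat hpd⟩

lemma B'set_infinite (hL : ∀ i, IsCompact (L i)) (c : List ℕ) : (B'set L c).Infinite := by
  obtain ⟨d, hd⟩ := Bset_nonempty L hL c
  apply Set.infinite_of_injective_forall_mem
    (f := fun j : ℕ => d ++ [j])
  case hi => intro a b hab; simpa using hab
  case hf => intro j; exact ⟨d, hd, j, rfl⟩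

lemma exists_enum (hL : ∀ i, IsCompact (L i)) (c : List ℕ) :
    ∃ f : ℕ → List ℕ, Function.Injective f ∧ Set.range f = B'set L c := by
  have h1 : (B'set L c).Countable := (Set.to_countable _)
  have h2 := B'set_infinite L hL c
  haveI := h1.to_subtype
  haveI := h2.to_subtype
  haveI : Encodable (B'set L c) := Encodable.ofCountable _
  haveI : Denumerable (B'set L c) := Denumerable.ofEncodableOfInfinite _
  refine ⟨fun n => ((Denumerable.eqv (B'set L c)).symm n : List ℕ), ?_, ?_⟩
  · exact Subtype.val_injective.comp (Equiv.injective _)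
  · ext e
    constructor
    · rintro ⟨n, rfl⟩
      exact ((Denumerable.eqv (B'set L c)).symm n).2
    · intro he
      exact ⟨Denumerable.eqv (B'set L c) ⟨e, he⟩, by simp⟩

end Scheme
section Psi

variable (L : ℕ → Set (ℕ → ℕ))

lemma getD_prefix {b b' : List ℕ} (h : b <+: b') {i : ℕ} (hi : i < b.length) :
    b.getD i 0 = b'.getD i 0 := by
  rw [List.getD_eq_getElem _ _ hi,
    List.getD_eq_getElem _ _ (lt_of_lt_of_le hi h.length_le)]
  exact h.getElem hi

noncomputable def enum (c : List ℕ) : ℕ → List ℕ :=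
  Classical.epsilon (fun f : ℕ → List ℕ => Function.Injective f ∧ Set.range f = B'set L c)

lemma enum_inj (hL : ∀ i, IsCompact (L i)) (c : List ℕ) :
    Function.Injective (enum L c) :=
  (Classical.epsilon_spec (exists_enum L hL c)).1

lemma enum_range (hL : ∀ i, IsCompact (L i)) (c : List ℕ) :
    Set.range (enum L c) = B'set L c :=
  (Classical.epsilon_spec (exists_enum L hL c)).2

lemma enum_mem (hL : ∀ i, IsCompact (L i)) (c : List ℕ) (n : ℕ) :
    enum L c n ∈ B'set L c := by
  rw [← enum_range L hL c]; exact ⟨n, rfl⟩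

noncomputable def psiAux : List ℕ → List ℕ
  | [] => []
  | n :: r => enum L (psiAux r) n

noncomputable def psi (a : List ℕ) : List ℕ := psiAux L a.reverse

@[simp] lemma psi_nil : psi L [] = [] := rfl

lemma psi_concat (a : List ℕ) (n : ℕ) : psi L (a ++ [n]) = enum L (psi L a) n := by
  simp [psi, psiAux]

variable {L}
variable (hL : ∀ i, IsCompact (L i))
include hL

lemma psi_mem_B' (a : List ℕ) (n : ℕ) : psi L (a ++ [n]) ∈ B'set L (psi L a) := by
  rw [psi_concat]; exact enum_mem L hL _ n

lemma psi_good (a : List ℕ) (n : ℕ) : GoodExt L (psi L a) (psi L (a ++ [n])) :=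
  B'set_good L (psi_mem_B' hL a n)

lemma psi_prefix (a : List ℕ) (n : ℕ) : psi L a <+: psi L (a ++ [n]) :=
  (psi_good hL a n).1

lemma psi_length : ∀ a : List ℕ, a.length ≤ (psi L a).length := by
  intro a
  induction a using List.reverseRecOn with
  | nil => simp
  | append_singleton a n ih =>
    have := (psi_good hL a n).2.1
    simp only [List.length_append, List.length_singleton]
    omega

lemma psi_avoid (a : List ℕ) (n : ℕ) :
    cyl (psi L (a ++ [n])) ∩ Mset L (psi L a).length = ∅ :=
  (psi_good hL a n).2.2

lemma psi_sib (a : List ℕ) {n m : ℕ} (hnm : n ≠ m) :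
    cyl (psi L (a ++ [n])) ∩ cyl (psi L (a ++ [m])) = ∅ := by
  have hne : psi L (a ++ [n]) ≠ psi L (a ++ [m]) := by
    rw [psi_concat, psi_concat]
    intro h
    exact hnm (enum_inj L hL (psi L a) h)
  obtain ⟨h1, h2⟩ := B'set_incomp L (psi_mem_B' hL a n) (psi_mem_B' hL a m) hne
  exact cyl_disjoint h1 h2

lemma psi_cover (a : List ℕ) {p : ℕ → ℕ} (hp1 : p ∈ cyl (psi L a))
    (hp2 : p ∉ ⋃ i, L i) : ∃ n : ℕ, p ∈ cyl (psi L (a ++ [n])) := by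
  obtain ⟨e, he, hpe⟩ := B'set_cover L hL (psi L a) hp1 hp2
  rw [← enum_range L hL (psi L a)] at he
  obtain ⟨n, rfl⟩ := he
  exact ⟨n, by rwa [psi_concat]⟩

lemma psi_chain (q : ℕ → ℕ) {j k : ℕ} (hjk : j ≤ k) :
    psi L (restrictSeq q j) <+: psi L (restrictSeq q k) := by
  induction k, hjk using Nat.le_induction with
  | base => exact List.prefix_refl _
  | succ k hk ih =>
    refine ih.trans ?_
    rw [restrictSeq_succ]
    exact psi_prefix hL _ (q k)

noncomputable def plim (L : ℕ → Set (ℕ → ℕ)) (q : ℕ → ℕ) : ℕ → ℕ :=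
  fun n => (psi L (restrictSeq q (n+1))).getD n 0

lemma plim_getD (q : ℕ → ℕ) {i k : ℕ} (hik : i < (psi L (restrictSeq q k)).length) :
    plim L q i = (psi L (restrictSeq q k)).getD i 0 := by
  rcases le_total (i+1) k with h | h
  · exact getD_prefix (psi_chain hL q h)
      (lt_of_lt_of_le (Nat.lt_succ_self i) (by simpa using psi_length hL (restrictSeq q (i+1))))
  · exact (getD_prefix (psi_chain hL q h) hik).symm

lemma plim_mem (q : ℕ → ℕ) (k : ℕ) : plim L q ∈ cyl (psi L (restrictSeq q k)) := by
  rw [mem_cyl]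
  apply List.ext_getElem (by simp)
  intro i h1 h2
  rw [← List.getD_eq_getElem _ 0 h1, ← List.getD_eq_getElem _ 0 h2]
  rw [restrictSeq_getD _ (by simpa using h1)]
  exact plim_getD hL q h2

lemma plim_notin (q : ℕ → ℕ) : plim L q ∉ ⋃ i, L i := by
  intro hmem
  rw [mem_iUnion] at hmem
  obtain ⟨i, hi⟩ := hmem
  have h1 : plim L q ∈ cyl (psi L (restrictSeq q (i+1))) := plim_mem hL q (i+1)
  have h2 := psi_avoid hL (restrictSeq q i) (q i)
  rw [← restrictSeq_succ] at h2
  have h3 : plim L q ∈ Mset L (psi L (restrictSeq q i)).length :=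
    subset_Mset L (le_trans (by simpa using psi_length hL (restrictSeq q i)) (le_refl _)) hi
  rw [Set.eq_empty_iff_forall_notMem] at h2
  exact h2 _ ⟨h1, h3⟩

lemma plim_unique (q : ℕ → ℕ) {p : ℕ → ℕ}
    (h : ∀ n, p ∈ cyl (psi L (restrictSeq q n))) : p = plim L q := by
  funext k
  have hk := h (k+1)
  rw [mem_cyl] at hk
  have hlen : k < (psi L (restrictSeq q (k+1))).length := by
    have := psi_length hL (restrictSeq q (k+1))
    simp only [restrictSeq_length] at this
    omega
  have := restrictSeq_getD p hlen
  rw [hk] at this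
  rw [← this, plim]

lemma psi_dense {p : ℕ → ℕ} (hp : p ∉ ⋃ i, L i) (N : ℕ) :
    ∃ a : List ℕ, a.length = N ∧ p ∈ cyl (psi L a) := by
  induction N with
  | zero => exact ⟨[], rfl, by simp⟩
  | succ N ih =>
    obtain ⟨a, ha, hpa⟩ := ih
    obtain ⟨n, hn⟩ := psi_cover hL a hpa hp
    exact ⟨a ++ [n], by simp [ha], hn⟩

end Psi
section Branch

variable {X : Type*} (V : List ℕ → Set X)

lemma V_child_subset (hpart : Partitions V univ) (a : List ℕ) (n : ℕ) :
    V (a ++ [n]) ⊆ V a := by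
  rw [hpart.1.2 a]
  exact subset_iUnion (fun m => V (a ++ [m])) n

lemma V_mono (hpart : Partitions V univ) : ∀ {b' b : List ℕ}, b <+: b' → V b' ⊆ V b := by
  intro b'
  induction b' using List.reverseRecOn with
  | nil =>
    intro b hb
    rw [List.prefix_nil.1 hb]
  | append_singleton b' n ih =>
    intro b hb
    rcases prefix_total hb (⟨[n], rfl⟩ : b' <+: b' ++ [n]) with hc | hc
    · exact (V_child_subset V hpart b' n).trans (ih hc)
    · have hlen : b.length ≤ b'.length + 1 := by simpa using hb.length_le
      rcases lt_or_eq_of_le hlen with h | h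
      · have hbb : b' = b := hc.eq_of_length (le_antisymm hc.length_le (by omega))
        rw [← hbb]
        exact V_child_subset V hpart b' n
      · have hbb : b = b' ++ [n] := hb.eq_of_length (by simpa using h)
        rw [hbb]

lemma V_disj_len (hpart : Partitions V univ) :
    ∀ (k : ℕ) {b b' : List ℕ}, b.length = k → b'.length = k → b ≠ b' →
      V b ∩ V b' = ∅ := by
  intro k
  induction k with
  | zero =>
    intro b b' hb hb' hne
    exact absurd ((List.length_eq_zero_iff.1 hb).trans (List.length_eq_zero_iff.1 hb').symm) hne
  | succ k ih =>
    intro b b' hb hb' hne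
    rcases List.eq_nil_or_concat b with rfl | ⟨c, i, rfl⟩
    · simp at hb
    rcases List.eq_nil_or_concat b' with rfl | ⟨c', i', rfl⟩
    · simp at hb'
    simp only [List.concat_eq_append] at *
    by_cases hcc : c = c'
    · subst hcc
      have hii : i ≠ i' := fun h => hne (by rw [h])
      exact hpart.2 c i i' hii
    · have hd := ih (b := c) (b' := c') (by simpa using hb) (by simpa using hb') hcc
      rw [Set.eq_empty_iff_forall_notMem] at hd ⊢
      intro x hx
      exact hd x ⟨V_child_subset V hpart c i hx.1, V_child_subset V hpart c' i' hx.2⟩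

noncomputable def gbr (x : X) : ℕ → List ℕ
  | 0 => []
  | n+1 => gbr x n ++ [Classical.epsilon (fun m => x ∈ V (gbr x n ++ [m]))]

@[simp] lemma gbr_length (x : X) : ∀ n, (gbr V x n).length = n := by
  intro n
  induction n with
  | zero => rfl
  | succ n ih => simp [gbr, ih]

lemma gbr_mem (hpart : Partitions V univ) (x : X) : ∀ n, x ∈ V (gbr V x n) := by
  intro n
  induction n with
  | zero => rw [show gbr V x 0 = [] from rfl, hpart.1.1]; trivial
  | succ n ih =>
    have hex : ∃ m, x ∈ V (gbr V x n ++ [m]) := by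
      have := hpart.1.2 (gbr V x n)
      rw [this] at ih
      simpa using ih
    exact Classical.epsilon_spec hex

noncomputable def brm (x : X) : ℕ → ℕ := fun n => (gbr V x (n+1)).getD n 0

lemma restrict_brm (x : X) : ∀ n, restrictSeq (brm V x) n = gbr V x n := by
  intro n
  induction n with
  | zero => rfl
  | succ n ih =>
    rw [restrictSeq_succ, ih]
    show gbr V x n ++ [(gbr V x (n+1)).getD n 0] = gbr V x (n+1)
    rw [show gbr V x (n+1) = gbr V x n ++ [_] from rfl]
    congr 1
    rw [List.getD_append_right _ _ _ _ (le_of_eq (gbr_length V x n))]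
    simp [gbr_length V x n]

lemma memV_iff (hpart : Partitions V univ) {x : X} {b : List ℕ} :
    x ∈ V b ↔ brm V x ∈ cyl b := by
  constructor
  · intro hx
    by_contra hcyl
    rw [mem_cyl, restrict_brm] at hcyl
    have hd := V_disj_len V hpart b.length (gbr_length V x b.length) rfl hcyl
    rw [Set.eq_empty_iff_forall_notMem] at hd
    exact hd x ⟨gbr_mem V hpart x b.length, hx⟩
  · intro hcyl
    rw [mem_cyl, restrict_brm] at hcyl
    rw [← hcyl]
    exact gbr_mem V hpart x b.length

lemma brm_fruit (hpart : Partitions V univ) {x : X} {p : ℕ → ℕ}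
    (h : ∀ n, x ∈ V (restrictSeq p n)) : brm V x = p := by
  apply funext_of_restrict
  intro n
  have := (memV_iff V hpart).1 (h n)
  rw [mem_cyl, restrictSeq_length] at this
  exact this

lemma brm_mem_fruit (hpart : Partitions V univ) (x : X) : x ∈ fruit V (brm V x) := by
  rw [fruit, mem_iInter]
  intro n
  rw [restrict_brm]
  exact gbr_mem V hpart x n

lemma brm_inj (hpart : Partitions V univ) (hstrict : StrictBranches V) :
    Function.Injective (brm V) := by
  intro x x' h
  obtain ⟨z, hz⟩ := hstrict (brm V x)
  have h1 : x ∈ fruit V (brm V x) := brm_mem_fruit V hpart x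
  have h2 : x' ∈ fruit V (brm V x) := by
    rw [h]; exact brm_mem_fruit V hpart x'
  rw [hz, mem_singleton_iff] at h1 h2
  rw [h1, h2]

lemma brm_continuous (hpart : Partitions V univ) [TopologicalSpace X]
    (hV : OpenScheme V) : Continuous (brm V) := by
  apply continuous_pi
  intro i
  rw [continuous_discrete_rng]
  intro m
  have heq : (fun x => brm V x i) ⁻¹' {m} =
      ⋃ (b : List ℕ) (_ : b.length = i+1 ∧ b.getD i 0 = m), V b := by
    ext x
    simp only [mem_preimage, mem_singleton_iff, mem_iUnion]
    constructor
    · intro hx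
      refine ⟨restrictSeq (brm V x) (i+1), ⟨by simp, ?_⟩, ?_⟩
      · rw [restrictSeq_getD _ (Nat.lt_succ_self i)]
        exact hx
      · exact (memV_iff V hpart).2 (by simp [mem_cyl])
    · rintro ⟨b, ⟨hb1, hb2⟩, hxb⟩
      have := (memV_iff V hpart).1 hxb
      rw [mem_cyl, hb1] at this
      rw [← hb2, ← this, restrictSeq_getD _ (Nat.lt_succ_self i)]
  rw [heq]
  exact isOpen_iUnion (fun b => isOpen_iUnion (fun _ => hV b))

end Branch

/-- If X is a π-space and K ⊆ X is σ-compact, then the subspace X \ K is a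
π-space. -/
theorem statement3 {X : Type} [TopologicalSpace X] (hX : IsPiSpace X)
    (K : Set X) (hK : IsSigmaCompact K) :
    IsPiSpace ↥(Kᶜ) := by
  obtain ⟨V, hVopen, hVpart, hVstrict, hVbase⟩ := hX
  obtain ⟨C, hC, hCK⟩ := hK
  set L : ℕ → Set (ℕ → ℕ) := fun i => brm V '' C i with hLdef
  have hL : ∀ i, IsCompact (L i) :=
    fun i => (hC i).image (brm_continuous V hVpart hVopen)
  -- basic translations
  have hbr_notin : ∀ x : X, x ∉ K → brm V x ∉ ⋃ i, L i := by
    intro x hx hmem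
    rw [mem_iUnion] at hmem
    obtain ⟨i, y, hyC, hyx⟩ := hmem
    have : y = x := brm_inj V hVpart hVstrict hyx
    subst this
    exact hx (hCK ▸ mem_iUnion.2 ⟨i, hyC⟩)
  -- point selection: for p avoiding all L i, there is x ∉ K with brm V x = p
  have pointOf : ∀ p : ℕ → ℕ, p ∉ ⋃ i, L i →
      ∃ x : X, x ∉ K ∧ brm V x = p := by
    intro p hp
    obtain ⟨x, hx⟩ := hVstrict p
    have hxf : x ∈ fruit V p := hx ▸ mem_singleton x
    have hxm : ∀ n, x ∈ V (restrictSeq p n) := fun n => mem_iInter.1 hxf n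
    have hbrx : brm V x = p := brm_fruit V hVpart hxm
    refine ⟨x, ?_, hbrx⟩
    intro hxK
    rw [← hCK, mem_iUnion] at hxK
    obtain ⟨i, hxi⟩ := hxK
    exact hp (mem_iUnion.2 ⟨i, ⟨x, hxi, hbrx⟩⟩)
  set W : List ℕ → Set ↥(Kᶜ) := fun a => Subtype.val ⁻¹' (V (psi L a)) with hWdef
  have hmemW : ∀ (y : ↥(Kᶜ)) (a : List ℕ), y ∈ W a ↔ brm V (y : X) ∈ cyl (psi L a) :=
    fun y a => memV_iff V hVpart
  have hynotin : ∀ y : ↥(Kᶜ), brm V (y : X) ∉ ⋃ i, L i :=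
    fun y => hbr_notin y.1 y.2
  refine ⟨W, ?_, ⟨⟨?_, ?_⟩, ?_⟩, ?_, ?_, ?_⟩
  · -- OpenScheme
    exact fun a => (hVopen (psi L a)).preimage continuous_subtype_val
  · -- root
    rw [hWdef]
    simp only [psi_nil, hVpart.1.1]
    rfl
  · -- covers
    intro a
    ext y
    simp only [mem_iUnion]
    constructor
    · intro hy
      obtain ⟨n, hn⟩ := psi_cover hL a ((hmemW y a).1 hy) (hynotin y)
      exact ⟨n, (hmemW y (a ++ [n])).2 hn⟩
    · rintro ⟨n, hn⟩
      exact V_mono V hVpart (psi_prefix hL a n) hn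
  · -- disjoint siblings
    intro a n m hnm
    rw [Set.eq_empty_iff_forall_notMem]
    intro y hy
    have h1 := (hmemW y (a ++ [n])).1 hy.1
    have h2 := (hmemW y (a ++ [m])).1 hy.2
    have := psi_sib hL a hnm
    rw [Set.eq_empty_iff_forall_notMem] at this
    exact this _ ⟨h1, h2⟩
  · -- strict branches
    intro q
    have hplim := plim_notin hL q
    obtain ⟨x, hxK, hbrx⟩ := pointOf (plim L q) hplim
    refine ⟨⟨x, hxK⟩, ?_⟩
    ext y
    simp only [fruit, mem_iInter, mem_singleton_iff]
    constructor
    · intro hy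
      have hcyl : ∀ n, brm V (y : X) ∈ cyl (psi L (restrictSeq q n)) :=
        fun n => (hmemW y _).1 (hy n)
      have : brm V (y : X) = plim L q := plim_unique hL q hcyl
      have hval : (y : X) = x := brm_inj V hVpart hVstrict (by rw [this, hbrx])
      exact Subtype.ext hval
    · rintro rfl
      intro n
      refine (hmemW _ (restrictSeq q n)).2 ?_
      rw [hbrx]
      exact plim_mem hL q n
  · -- pi-base: members open and nonempty
    rintro G ⟨a, rfl⟩
    refine ⟨(hVopen (psi L a)).preimage continuous_subtype_val, ?_⟩
    obtain ⟨p, hpc, hp⟩ := cyl_diff_sigma_compact L hL (psi L a)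
    obtain ⟨x, hxK, hbrx⟩ := pointOf p hp
    refine ⟨⟨x, hxK⟩, ?_⟩
    refine (hmemW _ a).2 ?_
    rw [hbrx]
    exact hpc
  · -- pi-base: density
    intro U hU hUne
    obtain ⟨t, htopen, htU⟩ := isOpen_induced_iff.1 hU
    obtain ⟨y0, hy0⟩ := hUne
    have htne : t.Nonempty := ⟨y0.1, by rw [← htU] at hy0; exact hy0⟩
    obtain ⟨G, ⟨c, rfl⟩, hGt⟩ := hVbase.2 t htopen htne
    obtain ⟨p, hpc, hp⟩ := cyl_diff_sigma_compact L hL c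
    obtain ⟨a, halen, hpa⟩ := psi_dense hL hp c.length
    have hpre : c <+: psi L a := by
      have h1 : c = restrictSeq p c.length := eq_restrict_of_mem_cyl hpc
      have h2 : psi L a = restrictSeq p (psi L a).length := eq_restrict_of_mem_cyl hpa
      have h3 : c.length ≤ (psi L a).length := by
        rw [← halen]
        exact psi_length hL a
      have h4 := restrictSeq_prefix p h3
      rwa [← h1, ← h2] at h4
    refine ⟨W a, ⟨a, rfl⟩, ?_⟩
    intro y hy
    rw [← htU]
    exact hGt (V_mono V hVpart hpre hy)
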